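/- arXiv:2004.03652 — 2 statements merged into one kernel-verified Lean document; each statement's English description precedes it below -/
import Mathlib

section
/- Let φ satisfy assumptions (A1)–(A2) with α ∈ (0,2) and a₀ ≤ 1/2, let ω be a modulus of continuity, and let ρ : ℝ → ℝ be smooth and 1-periodic with 0 ≤ ρ ≤ M₁ everywhere and |ρ(a)−ρ(b)| ≤ ω(|a−b|) for all a,b. Suppose x ≠ y satisfy ρ(x) − ρ(y) = ω(ξ) with ξ := |x−y| ∈ (0, r₀/2]. Then the one-sided bounds −𝓛ρ(x) ≤ 4c₁ ∫_ξ^{r₀} (ω(ξ+η) − ω(ξ)) η^{−(1+α)} dη + 2c₃M₁ and 𝓛ρ(y) ≤ 4c₁ ∫_ξ^{r₀} (ω(ξ+η) − ω(ξ)) η^{−(1+α)} dη + 2c₃M₁ hold. -/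
open Real MeasureTheory Filter Set Topology

noncomputable section

/-- Principal-value Lévy operator: (𝓛 f)(x) = p.v. ∫ φ(x-y)(f(x)-f(y)) dy. -/
def levy (φ f : ℝ → ℝ) (x : ℝ) : ℝ :=
  limUnder (nhdsWithin (0:ℝ) (Set.Ioi 0))
    (fun ε => ∫ y in {y : ℝ | ε ≤ |x - y|}, φ (x - y) * (f x - f y))

/-- Principal-value alignment force. -/
def alignForce (φ ρ u : ℝ → ℝ) (x : ℝ) : ℝ :=
  limUnder (nhdsWithin (0:ℝ) (Set.Ioi 0))
    (fun ε => ∫ y in {y : ℝ | ε ≤ |x - y|}, φ (x - y) * (u y - u x) * ρ y)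

/-- Periodization -/
def phiS (φ : ℝ → ℝ) (x : ℝ) : ℝ := ∑' k : ℤ, φ (x + (k : ℝ))

def supNorm (f : ℝ → ℝ) : ℝ := ⨆ x : ℝ, |f x|

structure A12 (φ : ℝ → ℝ) (α a₀ c₁ c₂ : ℝ) : Prop where
  αpos : 0 < α
  αlt : α < 2
  a₀pos : 0 < a₀
  a₀le : a₀ ≤ 1/2
  c₁ge : 1 ≤ c₁
  c₂pos : 0 < c₂
  even : ∀ x : ℝ, φ (-x) = φ x
  smooth : ContDiffOn ℝ 4 φ {(0:ℝ)}ᶜ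
  lower : ∀ x : ℝ, x ≠ 0 → |x| ≤ a₀ → c₁⁻¹ * |x| ^ (-(1+α)) ≤ φ x
  upper : ∀ x : ℝ, x ≠ 0 → |x| ≤ a₀ → φ x ≤ c₁ * |x| ^ (-(1+α))
  derivBound : ∀ j : ℕ, 1 ≤ j → j ≤ 4 → ∀ x : ℝ, x ≠ 0 → |x| ≤ a₀ →
    |iteratedDeriv j φ x| ≤ c₁ * |x| ^ (-(1+(j:ℝ)+α))
  mono : ∀ r s : ℝ, 0 < r → r ≤ s → s ≤ a₀ → φ s ≤ φ r
  tailInt : ∀ j : ℕ, j ≤ 4 →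
    IntegrableOn (fun x : ℝ => |x| ^ (j:ℝ) * |iteratedDeriv j φ x|) {x : ℝ | a₀ ≤ |x|}
  tailBound : ∀ j : ℕ, j ≤ 4 →
    (∫ x in {x : ℝ | a₀ ≤ |x|}, |x| ^ (j:ℝ) * |iteratedDeriv j φ x|) ≤ c₂

structure EASol (φ : ℝ → ℝ) (T : ℝ) (ρ u : ℝ → ℝ → ℝ) : Prop where
  smooth_rho : ContDiffOn ℝ (⊤ : ℕ∞) (Function.uncurry ρ) (Set.univ ×ˢ Set.Icc 0 T)
  smooth_u : ContDiffOn ℝ (⊤ : ℕ∞) (Function.uncurry u) (Set.univ ×ˢ Set.Icc 0 T)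
  periodic_rho : ∀ x t, ρ (x + 1) t = ρ x t
  periodic_u : ∀ x t, u (x + 1) t = u x t
  mass : ∀ x : ℝ, ∀ t ∈ Set.Icc 0 T,
    derivWithin (fun s => ρ x s) (Set.Icc 0 T) t + deriv (fun y => ρ y t * u y t) x = 0
  mom : ∀ x : ℝ, ∀ t ∈ Set.Icc 0 T,
    derivWithin (fun s => u x s) (Set.Icc 0 T) t + u x t * deriv (fun y => u y t) x
      = alignForce φ (fun y => ρ y t) (fun y => u y t) x

/-- A modulus of continuity: positive, continuous, nondecreasing and concave on `(0,∞)`. -/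
structure IsMOC (ω : ℝ → ℝ) : Prop where
  pos : ∀ ξ : ℝ, 0 < ξ → 0 < ω ξ
  cont : ContinuousOn ω (Set.Ioi 0)
  mono : MonotoneOn ω (Set.Ioi 0)
  concave : ConcaveOn ℝ (Set.Ioi 0) ω

lemma ae_compl_zero : ∀ᵐ t : ℝ ∂(volume : Measure ℝ), t ∈ ({(0:ℝ)}ᶜ : Set ℝ) := by
  rw [Filter.eventually_iff, mem_ae_iff]
  simp

lemma aesm_of_contOn_compl_zero {f : ℝ → ℝ} (hf : ContinuousOn f ({(0:ℝ)}ᶜ)) :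
    AEStronglyMeasurable f (volume : Measure ℝ) := by
  have h1 : AEStronglyMeasurable f ((volume : Measure ℝ).restrict {(0:ℝ)}ᶜ) :=
    hf.aestronglyMeasurable (isOpen_compl_singleton).measurableSet
  rwa [Measure.restrict_eq_self_of_ae_mem ae_compl_zero] at h1

/-- even function: integrals over reflected sets agree -/
lemma even_setIntegral {f : ℝ → ℝ} (hf : ∀ t, f (-t) = f t) (s : Set ℝ) :
    ∫ t in Neg.neg ⁻¹' s, f t = ∫ t in s, f t := by
  have := (Measure.measurePreserving_neg (volume : Measure ℝ)).setIntegral_preimage_emb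
    measurableEmbedding_neg f s
  simpa [hf] using this

lemma even_integrableOn {f : ℝ → ℝ} (hf : ∀ t, f (-t) = f t) {s : Set ℝ}
    (hs : MeasurableSet s) (h : IntegrableOn f s) : IntegrableOn f (Neg.neg ⁻¹' s) := by
  have h2 : IntegrableOn (fun t => f (-t)) (Neg.neg ⁻¹' s) := by
    refine (MeasurePreserving.integrableOn_comp_preimage ?_ measurableEmbedding_neg).2 h
    exact Measure.measurePreserving_neg _
  exact h2.congr_fun (fun t _ => hf t) (hs.preimage measurable_neg)

lemma periodic_bound {g : ℝ → ℝ} (hg : Continuous g) (hp : Function.Periodic g 1) :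
    ∃ K : ℝ, 0 ≤ K ∧ ∀ t, |g t| ≤ K := by
  obtain ⟨C, hC⟩ := (isCompact_Icc (a := (0:ℝ)) (b := 1)).exists_bound_of_continuousOn
    hg.continuousOn
  refine ⟨max C 0, le_max_right _ _, fun t => ?_⟩
  have h1 : g t = g (Int.fract t) := by
    rw [Int.fract]
    have := hp.sub_int_mul_eq (x := t) ⌊t⌋
    simpa using this.symm
  rw [h1]
  have : |g (Int.fract t)| ≤ C := by
    have := hC (Int.fract t) ⟨Int.fract_nonneg t, (Int.fract_lt_one t).le⟩
    simpa [Real.norm_eq_abs] using this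
  exact this.trans (le_max_left _ _)

lemma deriv_periodic {g : ℝ → ℝ} (hp : ∀ x, g (x + 1) = g x) :
    ∀ x, deriv g (x + 1) = deriv g x := by
  intro x
  have h1 : (fun s => g (s + 1)) = g := funext hp
  have h2 : deriv (fun s => g (s + 1)) x = deriv g (x + 1) := by
    exact deriv_comp_add_const g 1 x
  rw [h1] at h2
  exact h2.symm

/-- Lipschitz bound for `deriv ρ` of a smooth 1-periodic function. -/
lemma lip_deriv {ρ : ℝ → ℝ} (hsm : ContDiff ℝ (⊤ : ℕ∞) ρ) (hper : ∀ x, ρ (x + 1) = ρ x) :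
    ∃ K : ℝ, 0 ≤ K ∧ ∀ a b : ℝ, |deriv ρ a - deriv ρ b| ≤ K * |a - b| := by
  have hsm' : ContDiff ℝ ((⊤ : ℕ∞) : WithTop ℕ∞) ρ := hsm.of_le (by simp)
  have hd1 : ContDiff ℝ ((⊤ : ℕ∞) : WithTop ℕ∞) (deriv ρ) := by
    have := ContDiff.iterate_deriv 1 hsm'
    simpa using this
  have hcont2 : Continuous (deriv (deriv ρ)) := by
    have h2 : ContDiff ℝ ((⊤ : ℕ∞) : WithTop ℕ∞) (deriv (deriv ρ)) := by
      have := ContDiff.iterate_deriv 1 hd1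
      simpa using this
    exact h2.continuous
  have hp2 : Function.Periodic (deriv (deriv ρ)) 1 :=
    fun x => deriv_periodic (fun z => deriv_periodic hper z) x
  obtain ⟨K, hK0, hK⟩ := periodic_bound hcont2 hp2
  refine ⟨K, hK0, fun a b => ?_⟩
  have := Convex.norm_image_sub_le_of_norm_deriv_le (f := deriv ρ) (s := univ)
    (fun z _ => (hd1.differentiable (by simp)).differentiableAt)
    (fun z _ => by simpa [Real.norm_eq_abs] using hK z) convex_univ (mem_univ b) (mem_univ a)
  simpa [Real.norm_eq_abs] using this

/-- second difference bound -/
lemma second_diff {ρ : ℝ → ℝ} (hsm : ContDiff ℝ (⊤ : ℕ∞) ρ) {K : ℝ} (hK0 : 0 ≤ K)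
    (hK : ∀ a b : ℝ, |deriv ρ a - deriv ρ b| ≤ K * |a - b|) (x t : ℝ) :
    |ρ (x - t) + ρ (x + t) - 2 * ρ x| ≤ 2 * K * t ^ 2 := by
  set g : ℝ → ℝ := fun u => ρ (x + u) + ρ (x - u) with hg
  have hder : ∀ u : ℝ, HasDerivAt g (deriv ρ (x + u) - deriv ρ (x - u)) u := by
    intro u
    have h1 : HasDerivAt (fun u : ℝ => ρ (x + u)) (deriv ρ (x + u)) u := by
      have := (((hsm.differentiable (by simp)) (x + u)).hasDerivAt).comp u
        ((hasDerivAt_id u).const_add x)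
      simpa [Function.comp_def] using this
    have h2 : HasDerivAt (fun u : ℝ => ρ (x - u)) (-deriv ρ (x - u)) u := by
      have := (((hsm.differentiable (by simp)) (x - u)).hasDerivAt).comp u
        ((hasDerivAt_id u).const_sub x)
      simpa [Function.comp_def] using this
    have := h1.add h2; rw [← sub_eq_add_neg] at this; exact this
  have key : |g |t| - g 0| ≤ 2 * K * |t| * |(|t|) - 0| := by
    have := Convex.norm_image_sub_le_of_norm_deriv_le (f := g) (s := Icc 0 |t|)
      (fun z _ => (hder z).differentiableAt)
      (fun z hz => by
        rw [(hder z).deriv]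
        have h1 := hK (x + z) (x - z)
        have h2 : |(x + z) - (x - z)| = 2 * |z| := by
          rw [show (x + z) - (x - z) = 2 * z by ring, abs_mul]
          norm_num
        rw [h2] at h1
        have hzb : |z| ≤ |t| := by
          rw [abs_of_nonneg hz.1]; exact hz.2
        calc ‖deriv ρ (x + z) - deriv ρ (x - z)‖ ≤ K * (2 * |z|) := h1
          _ ≤ 2 * K * |t| := by nlinarith
        )
      (convex_Icc _ _) (left_mem_Icc.2 (abs_nonneg t)) (right_mem_Icc.2 (abs_nonneg t))
    simpa [Real.norm_eq_abs] using this
  have hgt : g |t| = ρ (x - t) + ρ (x + t) := by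
    rcases le_or_gt 0 t with h | h
    · rw [abs_of_nonneg h, hg]; ring_nf
    · rw [abs_of_neg h, hg]
      simp only [sub_neg_eq_add]
      ring_nf
  have hg0 : g 0 = 2 * ρ x := by simp [hg]; ring
  rw [hgt, hg0] at key
  have : |(|t|) - 0| = |t| := by simp
  rw [this] at key
  calc |ρ (x - t) + ρ (x + t) - 2 * ρ x| ≤ 2 * K * |t| * |t| := key
    _ = 2 * K * (|t| * |t|) := by ring
    _ = 2 * K * t ^ 2 := by rw [abs_mul_abs_self]; ring

lemma preimage_neg_Ioc' (a b : ℝ) : Neg.neg ⁻¹' (Ioc a b) = Ico (-b) (-a) := by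
  ext t; simp only [mem_preimage, mem_Ioc, mem_Ico]; constructor <;> intro h <;>
    constructor <;> linarith [h.1, h.2]

lemma preimage_neg_Icc' (a b : ℝ) : Neg.neg ⁻¹' (Icc a b) = Icc (-b) (-a) := by
  ext t; simp only [mem_preimage, mem_Icc]; constructor <;> intro h <;>
    constructor <;> linarith [h.1, h.2]

lemma integrableOn_singleton' (f : ℝ → ℝ) (c : ℝ) : IntegrableOn f {c} (volume) := by
  unfold IntegrableOn
  rw [Measure.restrict_eq_zero.2 (by simp)]
  exact integrable_zero_measure

/-- integrability of |t|^r on symmetric compact interval, r > -1 -/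
lemma integrableOn_abs_rpow {r : ℝ} (hr : -1 < r) (b : ℝ) :
    IntegrableOn (fun t : ℝ => |t| ^ r) (Icc (-b) b) := by
  rcases le_or_gt b 0 with hb | hb
  · refine (integrableOn_singleton' (fun t : ℝ => |t| ^ r) b).mono_set ?_
    intro t ht
    simp only [mem_Icc] at ht
    have : t = b := le_antisymm ht.2 (by linarith [ht.1])
    simp [this]
  · have h1 : IntegrableOn (fun t : ℝ => |t| ^ r) (Ioc 0 b) := by
      have h0 : IntegrableOn (fun t : ℝ => t ^ r) (Ioc 0 b) := by
        have := intervalIntegral.intervalIntegrable_rpow' (a := 0) (b := b) hr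
        rwa [intervalIntegrable_iff, uIoc_of_le hb.le] at this
      exact h0.congr_fun (fun t ht => by rw [abs_of_pos ht.1]) measurableSet_Ioc
    have h2 : IntegrableOn (fun t : ℝ => |t| ^ r) (Ico (-b) 0) := by
      rw [show Ico (-b) (0:ℝ) = Neg.neg ⁻¹' (Ioc 0 b) by rw [preimage_neg_Ioc', neg_zero]]
      exact even_integrableOn (fun t => by rw [abs_neg]) measurableSet_Ioc h1
    have h3 := (h1.union h2).union (integrableOn_singleton' (fun t : ℝ => |t| ^ r) 0)
    refine h3.mono_set ?_
    intro t ht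
    simp only [mem_Icc] at ht
    rcases lt_trichotomy t 0 with h | h | h
    · exact Or.inl (Or.inr ⟨ht.1, h⟩)
    · exact Or.inr (by simp [h])
    · exact Or.inl (Or.inl ⟨h, ht.2⟩)

lemma levy_repr {φ : ℝ → ℝ} {α a₀ c₁ c₂ : ℝ} (h : A12 φ α a₀ c₁ c₂)
    {M₁ : ℝ} {ρ : ℝ → ℝ} (hsm : ContDiff ℝ (⊤ : ℕ∞) ρ) (hper : ∀ x, ρ (x + 1) = ρ x)
    (hρ0 : ∀ x, 0 ≤ ρ x) (hρM : ∀ x, ρ x ≤ M₁) (x : ℝ) :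
    Integrable (fun t => φ t * (ρ x - (ρ (x - t) + ρ (x + t)) / 2)) ∧
    levy φ ρ x = ∫ t, φ t * (ρ x - (ρ (x - t) + ρ (x + t)) / 2) := by
  have c₁pos : (0:ℝ) < c₁ := lt_of_lt_of_le one_pos h.c₁ge
  have hM0 : 0 ≤ M₁ := (hρ0 0).trans (hρM 0)
  have hφcont : ContinuousOn φ ({(0:ℝ)}ᶜ) := h.smooth.continuousOn
  have hφae : AEStronglyMeasurable φ (volume : Measure ℝ) := aesm_of_contOn_compl_zero hφcont
  have hρc : Continuous ρ := hsm.continuous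
  set G : ℝ → ℝ := fun t => φ t * (ρ x - (ρ (x - t) + ρ (x + t)) / 2) with hGdef
  have hGcontfac : Continuous (fun t : ℝ => ρ x - (ρ (x - t) + ρ (x + t)) / 2) := by
    fun_prop
  have hGae : AEStronglyMeasurable G (volume : Measure ℝ) :=
    hφae.mul hGcontfac.aestronglyMeasurable
  have hφ_abs : ∀ t : ℝ, t ≠ 0 → |t| ≤ a₀ → |φ t| ≤ c₁ * |t| ^ (-(1+α)) := by
    intro t ht hta
    rw [abs_of_nonneg (le_trans (by positivity) (h.lower t ht hta))]
    exact h.upper t ht hta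
  obtain ⟨K, hK0, hK⟩ := lip_deriv hsm hper
  have hsd := second_diff hsm hK0 hK x
  have hGfac : ∀ t : ℝ, |ρ x - (ρ (x - t) + ρ (x + t)) / 2| ≤ K * t ^ 2 := by
    intro t
    have h2 : |ρ x - (ρ (x - t) + ρ (x + t)) / 2| = |ρ (x - t) + ρ (x + t) - 2 * ρ x| / 2 := by
      rw [abs_sub_comm, show (ρ (x - t) + ρ (x + t)) / 2 - ρ x
        = (ρ (x - t) + ρ (x + t) - 2 * ρ x) / 2 by ring, abs_div,
        show |(2:ℝ)| = 2 by norm_num]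
    rw [h2]
    linarith [hsd t]
  have hGbd : ∀ t : ℝ, |t| ≤ a₀ → |G t| ≤ c₁ * K * |t| ^ (1 - α) := by
    intro t hta
    rcases eq_or_ne t 0 with rfl | ht
    · have hz : G 0 = 0 := by simp [hGdef]
      rw [hz, abs_zero]
      positivity
    · have h1 : |G t| ≤ (c₁ * |t| ^ (-(1+α))) * (K * t ^ 2) := by
        rw [hGdef, abs_mul]
        exact mul_le_mul (hφ_abs t ht hta) (hGfac t) (abs_nonneg _)
          (mul_nonneg c₁pos.le (Real.rpow_nonneg (abs_nonneg t) _))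
      have h2 : (c₁ * |t| ^ (-(1+α))) * (K * t ^ 2) = c₁ * K * |t| ^ (1 - α) := by
        have ht' : (0:ℝ) < |t| := abs_pos.2 ht
        have e1 : t ^ 2 = |t| ^ ((2:ℕ):ℝ) := by
          rw [Real.rpow_natCast, sq_abs]
        rw [e1, show c₁ * |t| ^ (-(1+α)) * (K * |t| ^ ((2:ℕ):ℝ))
            = c₁ * K * (|t| ^ (-(1+α)) * |t| ^ ((2:ℕ):ℝ)) by ring, ← Real.rpow_add ht']
        congr 1
        push_cast
        ring
      exact h2 ▸ h1
  have hmaj : IntegrableOn (fun t : ℝ => c₁ * K * |t| ^ (1 - α)) (Icc (-a₀) a₀) :=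
    (integrableOn_abs_rpow (by linarith [h.αlt]) a₀).const_mul _
  have hIG1 : IntegrableOn G (Icc (-a₀) a₀) := by
    refine Integrable.mono hmaj (hGae.restrict) ?_
    refine (ae_restrict_iff' measurableSet_Icc).2 (Filter.Eventually.of_forall fun t ht => ?_)
    have hta : |t| ≤ a₀ := abs_le.2 ⟨ht.1, ht.2⟩
    rw [Real.norm_eq_abs, Real.norm_eq_abs]
    exact (hGbd t hta).trans (le_abs_self _)
  have htailset : MeasurableSet {t : ℝ | a₀ ≤ |t|} :=
    (isClosed_le continuous_const continuous_abs).measurableSet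
  have tail0 : IntegrableOn (fun t : ℝ => |φ t|) {t : ℝ | a₀ ≤ |t|} := by
    refine (h.tailInt 0 (by norm_num)).congr_fun (fun t _ => ?_) htailset
    simp [iteratedDeriv_zero]
  have hGtailbd : ∀ t : ℝ, |G t| ≤ M₁ * |φ t| := by
    intro t
    rw [hGdef, abs_mul, mul_comm]
    refine mul_le_mul_of_nonneg_right ?_ (abs_nonneg _)
    rw [abs_le]
    constructor
    · have e1 := hρ0 x; have e2 := hρM (x - t); have e3 := hρM (x + t); linarith
    · have e1 := hρM x; have e2 := hρ0 (x - t); have e3 := hρ0 (x + t); linarith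
  have hIG2 : IntegrableOn G {t : ℝ | a₀ ≤ |t|} := by
    refine Integrable.mono (tail0.const_mul M₁) (hGae.restrict) ?_
    refine Filter.Eventually.of_forall fun t => ?_
    rw [Real.norm_eq_abs, Real.norm_eq_abs]
    exact (hGtailbd t).trans (le_abs_self _)
  have hGint : Integrable G := by
    rw [← integrableOn_univ]
    refine (hIG1.union hIG2).mono_set fun t _ => ?_
    rcases le_or_gt (|t|) a₀ with hc | hc
    · exact Or.inl (abs_le.1 hc)
    · exact Or.inr hc.le
  refine ⟨hGint, ?_⟩
  have main : Tendsto (fun ε => ∫ y in {y : ℝ | ε ≤ |x - y|}, φ (x - y) * (ρ x - ρ y))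
      (nhdsWithin (0:ℝ) (Set.Ioi 0)) (nhds (∫ t, G t)) := by
    have hev : ∀ ε ∈ Ioo (0:ℝ) a₀,
        (∫ y in {y : ℝ | ε ≤ |x - y|}, φ (x - y) * (ρ x - ρ y))
          = (∫ t, G t) - ∫ t in Ioo (-ε) ε, G t := by
      intro ε hε
      set S : Set ℝ := {t : ℝ | ε ≤ |t|} with hSdef
      have hSm : MeasurableSet S := (isClosed_le continuous_const continuous_abs).measurableSet
      have hcov : (∫ y in {y : ℝ | ε ≤ |x - y|}, φ (x - y) * (ρ x - ρ y))
          = ∫ t in S, φ t * (ρ x - ρ (x - t)) := by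
        have hmp : MeasurePreserving (fun t : ℝ => x - t) volume volume :=
          Measure.measurePreserving_sub_left volume x
        have hemb : MeasurableEmbedding (fun t : ℝ => x - t) :=
          (Homeomorph.subLeft x).measurableEmbedding
        have hpre : (fun t : ℝ => x - t) ⁻¹' {y : ℝ | ε ≤ |x - y|} = S := by
          ext t; simp [hSdef, sub_sub_cancel]
        have hequ := hmp.setIntegral_preimage_emb hemb
          (fun y => φ (x - y) * (ρ x - ρ y)) {y : ℝ | ε ≤ |x - y|}
        rw [hpre] at hequ
        rw [← hequ]
        refine setIntegral_congr_fun hSm fun t _ => ?_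
        simp [sub_sub_cancel]
      set g1 : ℝ → ℝ := fun t => φ t * (ρ x - ρ (x - t)) with hg1def
      have hg1tailbd : ∀ t : ℝ, |g1 t| ≤ M₁ * |φ t| := by
        intro t
        rw [hg1def, abs_mul, mul_comm]
        refine mul_le_mul_of_nonneg_right ?_ (abs_nonneg _)
        rw [abs_le]
        constructor
        · have e1 := hρ0 x; have e2 := hρM (x - t); linarith
        · have e1 := hρM x; have e2 := hρ0 (x - t); linarith
      have hg1ae : AEStronglyMeasurable g1 (volume : Measure ℝ) :=
        hφae.mul (Continuous.aestronglyMeasurable (by fun_prop))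
      have hg1int : IntegrableOn g1 S := by
        have hcomp : IntegrableOn g1 (Icc ε a₀ ∪ Icc (-a₀) (-ε)) := by
          refine ContinuousOn.integrableOn_compact (isCompact_Icc.union isCompact_Icc) ?_
          refine ContinuousOn.mul (hφcont.mono ?_) (Continuous.continuousOn (by fun_prop))
          intro t ht
          simp only [mem_union, mem_Icc] at ht
          simp only [mem_compl_iff, mem_singleton_iff]
          rcases ht with ht | ht
          · intro hc; rw [hc] at ht; linarith [ht.1, hε.1]
          · intro hc; rw [hc] at ht; linarith [ht.2, hε.1]
        have htail : IntegrableOn g1 {t : ℝ | a₀ ≤ |t|} := by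
          refine Integrable.mono (tail0.const_mul M₁) (hg1ae.restrict) ?_
          refine Filter.Eventually.of_forall fun t => ?_
          rw [Real.norm_eq_abs, Real.norm_eq_abs]
          exact (hg1tailbd t).trans (le_abs_self _)
        refine (hcomp.union htail).mono_set fun t ht => ?_
        simp only [hSdef, mem_setOf_eq] at ht
        rcases le_or_gt (|t|) a₀ with hc | hc
        · rcases le_or_gt 0 t with h0 | h0
          · exact Or.inl (Or.inl ⟨by rwa [abs_of_nonneg h0] at ht, by
              rwa [abs_of_nonneg h0] at hc⟩)
          · exact Or.inl (Or.inr ⟨by rw [abs_of_neg h0] at hc; linarith, by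
              rw [abs_of_neg h0] at ht; linarith⟩)
        · exact Or.inr hc.le
      have hSsym : Neg.neg ⁻¹' S = S := by
        ext t; simp [hSdef]
      have hg1neg : IntegrableOn (fun t => g1 (-t)) S := by
        have hpre := (MeasurePreserving.integrableOn_comp_preimage
          (Measure.measurePreserving_neg (volume : Measure ℝ)) measurableEmbedding_neg
          (f := g1) (s := S)).2 hg1int
        rwa [hSsym] at hpre
      have hrefl : ∫ t in S, g1 (-t) = ∫ t in S, g1 t := by
        have hpre := (Measure.measurePreserving_neg (volume : Measure ℝ)).setIntegral_preimage_emb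
          measurableEmbedding_neg g1 S
        rwa [hSsym] at hpre
      have hGg1 : ∀ t : ℝ, G t = (g1 t + g1 (-t)) / 2 := by
        intro t
        rw [hGdef, hg1def]
        simp only [h.even t, sub_neg_eq_add]
        ring
      have hsym : ∫ t in S, g1 t = ∫ t in S, G t := by
        rw [show (fun t => G t) = fun t => (g1 t + g1 (-t)) / 2 from funext hGg1]
        rw [integral_div, integral_add hg1int hg1neg, hrefl]
        ring
      have hcompl : S = (Ioo (-ε) ε)ᶜ := by
        ext t
        simp only [hSdef, mem_setOf_eq, mem_compl_iff, mem_Ioo, not_and, not_lt]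
        constructor
        · intro ht h1
          rcases le_or_gt 0 t with h0 | h0
          · rwa [abs_of_nonneg h0] at ht
          · rw [abs_of_neg h0] at ht; linarith
        · intro ht
          rcases le_or_gt 0 t with h0 | h0
          · rw [abs_of_nonneg h0]
            by_contra hc
            push_neg at hc
            linarith [ht (by linarith), hc]
          · rw [abs_of_neg h0]
            by_contra hc
            push_neg at hc
            linarith [ht (by linarith)]
      have hsplit : (∫ t in Ioo (-ε) ε, G t) + ∫ t in S, G t = ∫ t, G t := by
        rw [hcompl]
        exact integral_add_compl measurableSet_Ioo hGint
      rw [hcov, hsym]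
      linarith [hsplit]
    have hsmall : Tendsto (fun ε => ∫ t in Ioo (-ε) ε, G t)
        (nhdsWithin (0:ℝ) (Set.Ioi 0)) (nhds 0) := by
      have hbnd : ∀ ε ∈ Ioo (0:ℝ) a₀, |∫ t in Ioo (-ε) ε, G t|
          ≤ 2 * (c₁ * K) * (ε ^ (2 - α) / (2 - α)) := by
        intro ε hε
        have hsub : Ioo (-ε) ε ⊆ Icc (-a₀) a₀ := fun t ht =>
          ⟨by linarith [ht.1, hε.2], by linarith [ht.2, hε.2]⟩
        have habs : |∫ t in Ioo (-ε) ε, G t| ≤ ∫ t in Ioo (-ε) ε, |G t| := by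
          simpa [Real.norm_eq_abs] using norm_integral_le_integral_norm
            (μ := (volume : Measure ℝ).restrict (Ioo (-ε) ε)) G
        have h1 : (∫ t in Ioo (-ε) ε, |G t|) ≤ ∫ t in Ioo (-ε) ε, c₁ * K * |t| ^ (1 - α) := by
          refine setIntegral_mono_on ((hIG1.mono_set hsub).abs) (hmaj.mono_set hsub)
            measurableSet_Ioo fun t ht => ?_
          exact hGbd t (abs_le.2 ⟨by linarith [ht.1, hε.2], by linarith [ht.2, hε.2]⟩)
        have hintIco : IntegrableOn (fun t : ℝ => c₁ * K * |t| ^ (1 - α)) (Ico (-ε) 0) :=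
          hmaj.mono_set fun t ht => ⟨by linarith [ht.1, hε.2], by linarith [ht.2, h.a₀pos]⟩
        have hintIoc : IntegrableOn (fun t : ℝ => c₁ * K * |t| ^ (1 - α)) (Ioc 0 ε) :=
          hmaj.mono_set fun t ht => ⟨by linarith [ht.1, h.a₀pos], by linarith [ht.2, hε.2]⟩
        have h2 : (∫ t in Ioo (-ε) ε, c₁ * K * |t| ^ (1 - α))
            ≤ ∫ t in Ico (-ε) 0 ∪ Ioc 0 ε, c₁ * K * |t| ^ (1 - α) := by
          refine setIntegral_mono_set (hintIco.union hintIoc)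
            (Filter.Eventually.of_forall fun t => by positivity) ?_
          have hz : ∀ᵐ u : ℝ ∂(volume : Measure ℝ), u ≠ 0 := by
            rw [Filter.eventually_iff, mem_ae_iff]
            simp [compl_setOf]
          refine hz.mono fun u hu hus => ?_
          rcases lt_or_gt_of_ne hu with h0 | h0
          · exact Or.inl ⟨hus.1.le, h0⟩
          · exact Or.inr ⟨h0, hus.2.le⟩
        have hdisj : Disjoint (Ico (-ε) 0) (Ioc 0 ε) := by
          rw [Set.disjoint_left]
          intro u hu hu2
          exact absurd hu2.1 (not_lt.2 hu.2.le)
        have h3 : (∫ t in Ico (-ε) 0 ∪ Ioc 0 ε, c₁ * K * |t| ^ (1 - α))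
            = 2 * ∫ t in Ioc 0 ε, c₁ * K * |t| ^ (1 - α) := by
          rw [setIntegral_union hdisj measurableSet_Ioc hintIco hintIoc]
          have hIcoe : (∫ t in Ico (-ε) 0, c₁ * K * |t| ^ (1 - α))
              = ∫ t in Ioc 0 ε, c₁ * K * |t| ^ (1 - α) := by
            rw [show Ico (-ε) (0:ℝ) = Neg.neg ⁻¹' (Ioc 0 ε) by
              rw [preimage_neg_Ioc', neg_zero]]
            exact even_setIntegral (fun t => by rw [abs_neg]) _
          rw [hIcoe]; ring
        have h4 : (∫ t in Ioc 0 ε, c₁ * K * |t| ^ (1 - α)) = c₁ * K * (ε ^ (2-α) / (2-α)) := by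
          rw [setIntegral_congr_fun measurableSet_Ioc
            (g := fun t : ℝ => c₁ * K * t ^ (1 - α)) (fun t ht => by rw [abs_of_pos ht.1])]
          rw [← intervalIntegral.integral_of_le hε.1.le, intervalIntegral.integral_const_mul,
            integral_rpow (Or.inl (by linarith [h.αlt])),
            show (1:ℝ) - α + 1 = 2 - α by ring,
            Real.zero_rpow (ne_of_gt (by linarith [h.αlt]))]
          ring
        calc |∫ t in Ioo (-ε) ε, G t| ≤ ∫ t in Ioo (-ε) ε, |G t| := habs
          _ ≤ ∫ t in Ioo (-ε) ε, c₁ * K * |t| ^ (1 - α) := h1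
          _ ≤ ∫ t in Ico (-ε) 0 ∪ Ioc 0 ε, c₁ * K * |t| ^ (1 - α) := h2
          _ = 2 * ∫ t in Ioc 0 ε, c₁ * K * |t| ^ (1 - α) := h3
          _ = 2 * (c₁ * K * (ε ^ (2-α) / (2-α))) := by rw [h4]
          _ = 2 * (c₁ * K) * (ε ^ (2-α) / (2-α)) := by ring
      have hB : Tendsto (fun ε : ℝ => 2 * (c₁ * K) * (ε ^ (2-α) / (2-α)))
          (nhdsWithin (0:ℝ) (Set.Ioi 0)) (nhds 0) := by
        have h0 : Tendsto (fun ε : ℝ => ε ^ (2-α)) (nhds (0:ℝ)) (nhds 0) := by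
          have hc := (Real.continuousAt_rpow_const 0 (2-α)
            (Or.inr (by linarith [h.αlt]))).tendsto
          rwa [Real.zero_rpow (ne_of_gt (by linarith [h.αlt]))] at hc
        have h1 : Tendsto (fun ε : ℝ => 2 * (c₁ * K) * (ε ^ (2-α) / (2-α)))
            (nhdsWithin (0:ℝ) (Set.Ioi 0)) (nhds (2 * (c₁ * K) * ((0:ℝ) / (2-α)))) :=
          Tendsto.const_mul _ ((h0.mono_left nhdsWithin_le_nhds).div_const _)
        simpa using h1
      refine squeeze_zero_norm' ?_ hB
      refine Filter.eventually_of_mem (Ioo_mem_nhdsGT_of_mem ⟨le_refl 0, h.a₀pos⟩)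
        fun ε hε => ?_
      simpa [Real.norm_eq_abs] using hbnd ε hε
    have hfin : Tendsto (fun ε => (∫ t, G t) - ∫ t in Ioo (-ε) ε, G t)
        (nhdsWithin (0:ℝ) (Set.Ioi 0)) (nhds (∫ t, G t)) := by
      simpa using (tendsto_const_nhds (x := ∫ t, G t)
        (f := nhdsWithin (0:ℝ) (Set.Ioi 0))).sub hsmall
    refine hfin.congr' ?_
    refine Filter.eventuallyEq_of_mem (Ioo_mem_nhdsGT_of_mem ⟨le_refl 0, h.a₀pos⟩)
      fun ε hε => ?_
    exact (hev ε hε).symm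
  unfold levy
  exact main.limUnder_eq

set_option maxHeartbeats 2000000 in
lemma bound_lemma {φ : ℝ → ℝ} {α a₀ c₁ c₂ : ℝ} (h : A12 φ α a₀ c₁ c₂)
    {ω : ℝ → ℝ} (hω : IsMOC ω) {M₁ : ℝ} {ρ : ℝ → ℝ}
    (hρ0 : ∀ x, 0 ≤ ρ x) (hρM : ∀ x, ρ x ≤ M₁)
    (hobeys : ∀ a b : ℝ, a ≠ b → |ρ a - ρ b| ≤ ω |a - b|)
    (x y ξ : ℝ) (hxy : x ≠ y) (hξ : ξ = |x - y|)
    (hξr : ξ ≤ min a₀ ((6 * c₁ * c₂) ^ (-(1 + α)⁻¹)) / 2)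
    (hscen : ρ x - ρ y = ω ξ)
    (hint : Integrable (fun t => φ t * (ρ x - (ρ (x - t) + ρ (x + t)) / 2))) :
    -(∫ t, φ t * (ρ x - (ρ (x - t) + ρ (x + t)) / 2)) ≤
      4 * c₁ * (∫ η in ξ..(min a₀ ((6 * c₁ * c₂) ^ (-(1 + α)⁻¹))),
        (ω (ξ + η) - ω ξ) / η ^ (1 + α))
      + 2 * (c₁ * (min a₀ ((6 * c₁ * c₂) ^ (-(1 + α)⁻¹))) ^ (-(1 + α)) + c₂ * (1 + a₀⁻¹)) * M₁ := by
  have c₁pos : (0:ℝ) < c₁ := lt_of_lt_of_le one_pos h.c₁ge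
  set r₀ : ℝ := min a₀ ((6 * c₁ * c₂) ^ (-(1 + α)⁻¹)) with hr₀def
  set G : ℝ → ℝ := fun t => φ t * (ρ x - (ρ (x - t) + ρ (x + t)) / 2) with hGdef
  set nG : ℝ → ℝ := fun t => φ t * ((ρ (x - t) + ρ (x + t)) / 2 - ρ x) with hnGdef
  have hnG : ∀ t, nG t = - G t := by intro t; rw [hnGdef, hGdef]; ring
  have hnGint : Integrable nG := by
    refine (hint.neg).congr (Filter.Eventually.of_forall fun t => (hnG t).symm)
  set s : ℝ := x - y with hsdef
  have hsne : s ≠ 0 := sub_ne_zero.2 hxy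
  have hs : |s| = ξ := hξ.symm
  have hξpos : 0 < ξ := hξ ▸ abs_pos.2 hsne
  have hr₀pos : 0 < r₀ := lt_min h.a₀pos (Real.rpow_pos_of_pos (by nlinarith [c₁pos, h.c₂pos]) _)
  have hr₀a₀ : r₀ ≤ a₀ := min_le_left _ _
  have hξltr : ξ < r₀ := lt_of_le_of_lt hξr (by linarith)
  have hξa₀ : ξ < a₀ := hξltr.trans_le hr₀a₀
  have hM0 : 0 ≤ M₁ := (hρ0 0).trans (hρM 0)
  have hexpneg : -(1 + α) ≤ 0 := by linarith [h.αpos]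
  have hφ_nonneg : ∀ t : ℝ, t ≠ 0 → |t| ≤ a₀ → 0 ≤ φ t := fun t ht hta =>
    le_trans (by positivity) (h.lower t ht hta)
  -- main pointwise claim
  have clmA : ∀ d : ℝ, ρ (x + d) - ρ x ≤ ω (ξ + |d|) - ω ξ := by
    intro d
    have hωpos2 : 0 < ω (ξ + |d|) := hω.pos _ (by positivity)
    rcases eq_or_ne (x + d) y with he | hne
    · rw [he]
      linarith [hscen]
    · have h1 : ρ (x + d) - ρ y ≤ ω |x + d - y| := le_of_abs_le (hobeys _ _ hne)
      have he2 : x + d - y = s + d := by rw [hsdef]; ring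
      have habs : |s + d| ≤ ξ + |d| := by
        calc |s + d| ≤ |s| + |d| := abs_add_le s d
          _ = ξ + |d| := by rw [hs]
      have hmem1 : |s + d| ∈ Ioi (0:ℝ) := by
        rw [mem_Ioi, abs_pos, ← he2]
        exact sub_ne_zero.2 hne
      have h2 : ω |s + d| ≤ ω (ξ + |d|) :=
        hω.mono hmem1 (by rw [mem_Ioi]; positivity) habs
      rw [he2] at h1
      linarith [hscen]
  -- Region S1
  have hS1 : (∫ t in Ioo (-ξ) ξ, nG t) ≤ 0 := by
    refine setIntegral_nonpos measurableSet_Ioo fun t ht => ?_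
    rcases eq_or_ne t 0 with rfl | ht0
    · simp [hnGdef]
    · have htξ : |t| < ξ := abs_lt.2 ⟨ht.1, ht.2⟩
      have hts : t ≠ s := fun hc => by rw [hc, hs] at htξ; exact lt_irrefl _ htξ
      have htns : t ≠ -s := fun hc => by
        rw [hc, abs_neg, hs] at htξ; exact lt_irrefl _ htξ
      have hne1 : x - t ≠ y := by
        intro hc
        apply hts
        rw [hsdef]
        linarith [hc]
      have hne2 : x + t ≠ y := by
        intro hc
        apply htns
        rw [hsdef]
        linarith [hc]
      have e1 : x - t - y = s - t := by rw [hsdef]; ring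
      have e2 : x + t - y = s + t := by rw [hsdef]; ring
      have hb1 : ρ (x - t) - ρ y ≤ ω |s - t| := by
        have := le_of_abs_le (hobeys (x - t) y hne1)
        rwa [e1] at this
      have hb2 : ρ (x + t) - ρ y ≤ ω |s + t| := by
        have := le_of_abs_le (hobeys (x + t) y hne2)
        rwa [e2] at this
      have hmem1 : |s - t| ∈ Ioi (0:ℝ) := by
        rw [mem_Ioi, abs_pos, sub_ne_zero]
        exact fun hc => hts hc.symm
      have hmem2 : |s + t| ∈ Ioi (0:ℝ) := by
        rw [mem_Ioi, abs_pos]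
        exact fun hc => htns (by linarith [add_eq_zero_iff_eq_neg.1 hc])
      have habsum : |s - t| + |s + t| = 2 * ξ := by
        rcases lt_or_gt_of_ne hsne with h0 | h0
        · have hsξ : ξ = -s := by rw [← hs, abs_of_neg h0]
          rw [abs_of_nonpos (by cases abs_lt.1 htξ; linarith),
            abs_of_nonpos (by cases abs_lt.1 htξ; linarith)]
          linarith
        · have hsξ : ξ = s := by rw [← hs, abs_of_pos h0]
          rw [abs_of_nonneg (by cases abs_lt.1 htξ; linarith),
            abs_of_nonneg (by cases abs_lt.1 htξ; linarith)]
          linarith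
      have hcon := hω.concave.2 hmem1 hmem2 (by norm_num : (0:ℝ) ≤ 1/2)
        (by norm_num : (0:ℝ) ≤ 1/2) (by norm_num)
      have hmid : (1/2 : ℝ) • |s - t| + (1/2 : ℝ) • |s + t| = ξ := by
        simp only [smul_eq_mul]
        linarith
      rw [hmid] at hcon
      simp only [smul_eq_mul] at hcon
      have hωsum : ω |s - t| + ω |s + t| ≤ 2 * ω ξ := by linarith
      have hfac : (ρ (x - t) + ρ (x + t)) / 2 - ρ x ≤ 0 := by
        linarith [hscen, hb1, hb2]
      have hφt : 0 ≤ φ t := hφ_nonneg t ht0 (by linarith [htξ, hξa₀])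
      exact mul_nonpos_iff.2 (Or.inl ⟨hφt, hfac⟩)
  -- Region S2
  set S2 : Set ℝ := Icc ξ r₀ ∪ Icc (-r₀) (-ξ) with hS2def
  have hS2m : MeasurableSet S2 := measurableSet_Icc.union measurableSet_Icc
  have hS2abs : ∀ t ∈ S2, ξ ≤ |t| ∧ |t| ≤ r₀ ∧ t ≠ 0 := by
    intro t ht
    rcases ht with ht | ht
    · have h1 : 0 < t := lt_of_lt_of_le hξpos ht.1
      rw [abs_of_pos h1]
      exact ⟨ht.1, ht.2, ne_of_gt h1⟩
    · have h1 : t < 0 := lt_of_le_of_lt ht.2 (by linarith)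
      rw [abs_of_neg h1]
      exact ⟨by linarith [ht.2], by linarith [ht.1], ne_of_lt h1⟩
  set maj : ℝ → ℝ := fun t => c₁ * |t| ^ (-(1+α)) * (ω (ξ + |t|) - ω ξ) with hmajdef
  have hmajcont : ContinuousOn maj S2 := by
    refine ContinuousOn.mul (ContinuousOn.mul continuousOn_const ?_) (ContinuousOn.sub ?_ continuousOn_const)
    · refine ContinuousOn.rpow_const (continuous_abs.continuousOn) fun t ht => Or.inl ?_
      exact ne_of_gt (lt_of_lt_of_le hξpos (hS2abs t ht).1)
    · refine ContinuousOn.comp hω.cont (by fun_prop) fun t ht => ?_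
      rw [mem_Ioi]
      positivity
  have hS2compact : IsCompact S2 := isCompact_Icc.union isCompact_Icc
  have hS2int : IntegrableOn maj S2 := hmajcont.integrableOn_compact hS2compact
  have hP2 : ∀ t ∈ S2, nG t ≤ maj t := by
    intro t ht
    obtain ⟨h1, h2, ht0⟩ := hS2abs t ht
    have hd1 : ρ (x + t) - ρ x ≤ ω (ξ + |t|) - ω ξ := clmA t
    have hd2 : ρ (x - t) - ρ x ≤ ω (ξ + |t|) - ω ξ := by
      have := clmA (-t)
      rwa [abs_neg, ← sub_eq_add_neg] at this
    have hφt0 : 0 ≤ φ t := hφ_nonneg t ht0 (h2.trans hr₀a₀)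
    have hωd : 0 ≤ ω (ξ + |t|) - ω ξ := by
      have := hω.mono (mem_Ioi.2 hξpos) (mem_Ioi.2 (by positivity : (0:ℝ) < ξ + |t|))
        (by linarith [abs_nonneg t, h1])
      linarith
    calc nG t = φ t * ((ρ (x - t) + ρ (x + t)) / 2 - ρ x) := rfl
      _ ≤ φ t * (ω (ξ + |t|) - ω ξ) := by
          refine mul_le_mul_of_nonneg_left ?_ hφt0
          linarith
      _ ≤ (c₁ * |t| ^ (-(1+α))) * (ω (ξ + |t|) - ω ξ) := by
          refine mul_le_mul_of_nonneg_right (h.upper t ht0 (h2.trans hr₀a₀)) hωd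
      _ = maj t := rfl
  have hS2bd : (∫ t in S2, nG t) ≤ ∫ t in S2, maj t :=
    setIntegral_mono_on (hnGint.integrableOn) hS2int hS2m hP2
  have hIccint : IntegrableOn maj (Icc ξ r₀) := hS2int.mono_set subset_union_left
  have hS2val : (∫ t in S2, maj t)
      = 2 * (c₁ * ∫ η in ξ..r₀, (ω (ξ + η) - ω ξ) / η ^ (1 + α)) := by
    have hdisj : Disjoint (Icc ξ r₀) (Icc (-r₀) (-ξ)) := by
      rw [Set.disjoint_left]
      intro u hu hu2
      have := hu.1; have := hu2.2
      linarith
    have hrefl : (∫ t in Icc (-r₀) (-ξ), maj t) = ∫ t in Icc ξ r₀, maj t := by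
      rw [show Icc (-r₀) (-ξ) = Neg.neg ⁻¹' (Icc ξ r₀) by rw [preimage_neg_Icc']]
      exact even_setIntegral (fun t => by rw [hmajdef]; simp [abs_neg]) _
    have hIval : (∫ t in Icc ξ r₀, maj t)
        = c₁ * ∫ η in ξ..r₀, (ω (ξ + η) - ω ξ) / η ^ (1 + α) := by
      have hcongr : ∀ η ∈ Ioc ξ r₀, maj η = c₁ * ((ω (ξ + η) - ω ξ) / η ^ (1 + α)) := by
        intro η hη
        have hηpos : 0 < η := lt_trans hξpos hη.1
        show c₁ * |η| ^ (-(1+α)) * (ω (ξ + |η|) - ω ξ) = _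
        rw [abs_of_pos hηpos, Real.rpow_neg hηpos.le, div_eq_mul_inv]
        ring
      rw [integral_Icc_eq_integral_Ioc, setIntegral_congr_fun measurableSet_Ioc hcongr,
        ← intervalIntegral.integral_of_le hξltr.le, intervalIntegral.integral_const_mul]
    rw [hS2def, setIntegral_union hdisj measurableSet_Icc hIccint
      (by rw [show Icc (-r₀) (-ξ) = Neg.neg ⁻¹' (Icc ξ r₀) by rw [preimage_neg_Icc']]
          exact even_integrableOn (fun t => by rw [hmajdef]; simp [abs_neg])
            measurableSet_Icc hIccint), hrefl, hIval]
    ring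
  -- Region S3
  set S3 : Set ℝ := Ioc r₀ a₀ ∪ Ico (-a₀) (-r₀) with hS3def
  have hS3m : MeasurableSet S3 := measurableSet_Ioc.union measurableSet_Ico
  have hS3abs : ∀ t ∈ S3, r₀ < |t| ∧ |t| ≤ a₀ ∧ t ≠ 0 := by
    intro t ht
    rcases ht with ht | ht
    · have h1 : 0 < t := lt_trans hr₀pos ht.1
      rw [abs_of_pos h1]
      exact ⟨ht.1, ht.2, ne_of_gt h1⟩
    · have h1 : t < 0 := lt_of_lt_of_le ht.2 (by linarith)
      rw [abs_of_neg h1]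
      exact ⟨by linarith [ht.2], by linarith [ht.1], ne_of_lt h1⟩
  have hP3 : ∀ t ∈ S3, nG t ≤ c₁ * r₀ ^ (-(1+α)) * M₁ := by
    intro t ht
    obtain ⟨h1, h2, ht0⟩ := hS3abs t ht
    have hφt0 : 0 ≤ φ t := hφ_nonneg t ht0 h2
    have hfub : φ t ≤ c₁ * r₀ ^ (-(1+α)) := by
      refine (h.upper t ht0 h2).trans ?_
      refine mul_le_mul_of_nonneg_left ?_ c₁pos.le
      exact rpow_le_rpow_of_nonpos hr₀pos h1.le hexpneg
    have hfac : (ρ (x - t) + ρ (x + t)) / 2 - ρ x ≤ M₁ := by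
      have e1 := hρM (x - t); have e2 := hρM (x + t); have e3 := hρ0 x
      linarith
    calc nG t = φ t * ((ρ (x - t) + ρ (x + t)) / 2 - ρ x) := rfl
      _ ≤ φ t * M₁ := mul_le_mul_of_nonneg_left hfac hφt0
      _ ≤ (c₁ * r₀ ^ (-(1+α))) * M₁ := mul_le_mul_of_nonneg_right hfub hM0
  have hS3fin : volume S3 ≠ ⊤ := by
    refine ne_of_lt (lt_of_le_of_lt (measure_union_le _ _) ?_)
    exact ENNReal.add_lt_top.2 ⟨measure_Ioc_lt_top, measure_Ico_lt_top⟩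
  have hS3 : (∫ t in S3, nG t) ≤ c₁ * r₀ ^ (-(1+α)) * M₁ := by
    have hstep : (∫ t in S3, nG t) ≤ ∫ t in S3, c₁ * r₀ ^ (-(1+α)) * M₁ :=
      setIntegral_mono_on (hnGint.integrableOn)
        (integrableOn_const hS3fin) hS3m hP3
    refine hstep.trans ?_
    rw [setIntegral_const, smul_eq_mul]
    have hμ : (volume S3).toReal = 2 * (a₀ - r₀) := by
      rw [hS3def, measure_union ?_ measurableSet_Ico]
      · rw [Real.volume_Ioc, Real.volume_Ico, ← ENNReal.ofReal_add (by linarith) (by linarith),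
          ENNReal.toReal_ofReal (by linarith)]
        ring_nf
      · rw [Set.disjoint_left]
        intro u hu hu2
        have := hu.1; have := hu2.2
        linarith
    rw [measureReal_def, hμ]
    have hC3 : 0 ≤ c₁ * r₀ ^ (-(1+α)) * M₁ := by positivity
    nlinarith [h.a₀le, hr₀pos]
  -- Region S4
  set S4 : Set ℝ := {t : ℝ | a₀ < |t|} with hS4def
  have hS4m : MeasurableSet S4 := (isOpen_lt continuous_const continuous_abs).measurableSet
  have htailm : MeasurableSet {t : ℝ | a₀ ≤ |t|} :=
    (isClosed_le continuous_const continuous_abs).measurableSet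
  have htail0 := h.tailInt 0 (by norm_num)
  have hP4 : ∀ t ∈ S4, nG t ≤ M₁ * (|t| ^ ((0:ℕ):ℝ) * |iteratedDeriv 0 φ t|) := by
    intro t _
    have e0 : |t| ^ ((0:ℕ):ℝ) * |iteratedDeriv 0 φ t| = |φ t| := by
      simp [iteratedDeriv_zero]
    rw [e0]
    have hbd : |nG t| ≤ M₁ * |φ t| := by
      rw [hnGdef, abs_mul, mul_comm]
      refine mul_le_mul_of_nonneg_right ?_ (abs_nonneg _)
      rw [abs_le]
      constructor
      · have e1 := hρM x; have e2 := hρ0 (x - t); have e3 := hρ0 (x + t); linarith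
      · have e1 := hρ0 x; have e2 := hρM (x - t); have e3 := hρM (x + t); linarith
    exact (le_abs_self _).trans hbd
  have hmaj4 : IntegrableOn (fun t : ℝ => M₁ * (|t| ^ ((0:ℕ):ℝ) * |iteratedDeriv 0 φ t|))
      {t : ℝ | a₀ ≤ |t|} := htail0.const_mul M₁
  have hS4 : (∫ t in S4, nG t) ≤ M₁ * c₂ := by
    have hstep : (∫ t in S4, nG t)
        ≤ ∫ t in S4, M₁ * (|t| ^ ((0:ℕ):ℝ) * |iteratedDeriv 0 φ t|) :=
      setIntegral_mono_on (hnGint.integrableOn)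
        (hmaj4.mono_set (fun t ht => le_of_lt (show a₀ < |t| from ht))) hS4m hP4
    have hstep2 : (∫ t in S4, M₁ * (|t| ^ ((0:ℕ):ℝ) * |iteratedDeriv 0 φ t|))
        ≤ ∫ t in {t : ℝ | a₀ ≤ |t|}, M₁ * (|t| ^ ((0:ℕ):ℝ) * |iteratedDeriv 0 φ t|) := by
      refine setIntegral_mono_set (htail0.const_mul M₁)
        (Filter.Eventually.of_forall fun t => by positivity)
        (Filter.Eventually.of_forall fun t ht => le_of_lt ht)
    have hstep3 : (∫ t in {t : ℝ | a₀ ≤ |t|}, M₁ * (|t| ^ ((0:ℕ):ℝ) * |iteratedDeriv 0 φ t|))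
        = M₁ * ∫ t in {t : ℝ | a₀ ≤ |t|}, |t| ^ ((0:ℕ):ℝ) * |iteratedDeriv 0 φ t| := by
      simpa using integral_smul (μ := (volume : Measure ℝ).restrict {t : ℝ | a₀ ≤ |t|}) M₁
        (fun t : ℝ => |t| ^ ((0:ℕ):ℝ) * |iteratedDeriv 0 φ t|)
    refine hstep.trans (hstep2.trans ?_)
    rw [hstep3]
    refine mul_le_mul_of_nonneg_left ?_ hM0
    have hb := h.tailBound 0 (by norm_num)
    exact_mod_cast hb
  -- decomposition
  have hcover : (univ : Set ℝ) = Ioo (-ξ) ξ ∪ (S2 ∪ (S3 ∪ S4)) := by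
    ext t
    simp only [mem_univ, true_iff, mem_union, mem_Ioo, hS2def, hS3def, hS4def,
      mem_Icc, mem_Ioc, mem_Ico, mem_setOf_eq]
    rcases le_or_gt 0 t with h0 | h0
    · rcases lt_or_ge t ξ with hc | hc
      · exact Or.inl ⟨by linarith, hc⟩
      · rcases le_or_gt t r₀ with hc2 | hc2
        · exact Or.inr (Or.inl (Or.inl ⟨hc, hc2⟩))
        · rcases le_or_gt t a₀ with hc3 | hc3
          · exact Or.inr (Or.inr (Or.inl (Or.inl ⟨hc2, hc3⟩)))
          · exact Or.inr (Or.inr (Or.inr (by rw [abs_of_nonneg h0]; exact hc3)))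
    · rcases lt_or_ge (-ξ) t with hc | hc
      · exact Or.inl ⟨hc, by linarith⟩
      · rcases le_or_gt (-r₀) t with hc2 | hc2
        · exact Or.inr (Or.inl (Or.inr ⟨hc2, hc⟩))
        · rcases le_or_gt (-a₀) t with hc3 | hc3
          · exact Or.inr (Or.inr (Or.inl (Or.inr ⟨hc3, hc2⟩)))
          · exact Or.inr (Or.inr (Or.inr (by rw [abs_of_neg h0]; linarith)))
  have habs1 : ∀ t ∈ Ioo (-ξ) ξ, |t| < ξ := fun t ht => abs_lt.2 ⟨ht.1, ht.2⟩
  have hd12 : Disjoint (Ioo (-ξ) ξ) (S2 ∪ (S3 ∪ S4)) := by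
    rw [Set.disjoint_left]
    intro t ht htc
    have h1 := habs1 t ht
    rcases htc with hc | hc | hc
    · exact absurd h1 (not_lt.2 (hS2abs t hc).1)
    · have := (hS3abs t hc).1; linarith
    · have : a₀ < |t| := hc; linarith
  have hd23 : Disjoint S2 (S3 ∪ S4) := by
    rw [Set.disjoint_left]
    intro t ht htc
    have h1 := (hS2abs t ht).2.1
    rcases htc with hc | hc
    · have := (hS3abs t hc).1; linarith
    · have : a₀ < |t| := hc; linarith
  have hd34 : Disjoint S3 S4 := by
    rw [Set.disjoint_left]
    intro t ht htc
    have h1 := (hS3abs t ht).2.1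
    have : a₀ < |t| := htc
    linarith
  have hdecomp : (∫ t, nG t) = (∫ t in Ioo (-ξ) ξ, nG t) + ((∫ t in S2, nG t)
      + ((∫ t in S3, nG t) + (∫ t in S4, nG t))) := by
    rw [← setIntegral_univ (f := nG), hcover,
      setIntegral_union hd12 (hS2m.union (hS3m.union hS4m)) hnGint.integrableOn
        hnGint.integrableOn,
      setIntegral_union hd23 (hS3m.union hS4m) hnGint.integrableOn hnGint.integrableOn,
      setIntegral_union hd34 hS4m hnGint.integrableOn hnGint.integrableOn]
  -- conclusion
  have hJ : 0 ≤ ∫ η in ξ..r₀, (ω (ξ + η) - ω ξ) / η ^ (1 + α) := by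
    refine intervalIntegral.integral_nonneg hξltr.le fun u hu => ?_
    have hu1 : ξ ≤ u := hu.1
    have hupos : 0 < u := lt_of_lt_of_le hξpos hu1
    refine div_nonneg ?_ (Real.rpow_nonneg hupos.le _)
    have := hω.mono (mem_Ioi.2 hξpos) (mem_Ioi.2 (by linarith : (0:ℝ) < ξ + u))
      (by linarith)
    linarith
  have hneg : -(∫ t, G t) = ∫ t, nG t := by
    rw [show (fun t => nG t) = fun t => -(G t) from funext hnG, integral_neg]
  rw [hneg, hdecomp]
  have hA : 0 ≤ c₁ * r₀ ^ (-(1+α)) := mul_nonneg c₁pos.le (Real.rpow_nonneg hr₀pos.le _)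
  have hinv : 0 < a₀⁻¹ := inv_pos.2 h.a₀pos
  nlinarith [hS1, hS2bd.trans_eq hS2val, hS3, hS4, hJ, c₁pos, hM0, h.c₂pos,
    mul_nonneg hM0 hA, mul_nonneg hM0 h.c₂pos.le,
    mul_nonneg (mul_nonneg hM0 h.c₂pos.le) hinv.le, mul_nonneg c₁pos.le hJ]

/-- (One-sided bounds at a breakthrough pair.) If `0 ≤ ρ ≤ M₁` obeys
`ω` and `ρ(x) − ρ(y) = ω(ξ)` with `ξ = |x−y| ∈ (0, r₀/2]`, then both `−𝓛ρ(x)` and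
`𝓛ρ(y)` are at most `4c₁ ∫_ξ^{r₀} (ω(ξ+η) − ω(ξ)) η^{-(1+α)} dη + 2c₃M₁`. -/
theorem stmt16 (φ : ℝ → ℝ) (α a₀ c₁ c₂ : ℝ) (h : A12 φ α a₀ c₁ c₂)
    (ω : ℝ → ℝ) (hω : IsMOC ω) (M₁ : ℝ)
    (ρ : ℝ → ℝ) (hsm : ContDiff ℝ (⊤ : ℕ∞) ρ) (hper : ∀ x, ρ (x + 1) = ρ x)
    (hρ0 : ∀ x, 0 ≤ ρ x) (hρM : ∀ x, ρ x ≤ M₁)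
    (hobeys : ∀ a b : ℝ, a ≠ b → |ρ a - ρ b| ≤ ω |a - b|)
    (x y ξ : ℝ) (hxy : x ≠ y) (hξ : ξ = |x - y|)
    (hξr : ξ ≤ min a₀ ((6 * c₁ * c₂) ^ (-(1 + α)⁻¹)) / 2)
    (hscen : ρ x - ρ y = ω ξ) :
    let r₀ := min a₀ ((6 * c₁ * c₂) ^ (-(1 + α)⁻¹))
    let c₃ := c₁ * r₀ ^ (-(1 + α)) + c₂ * (1 + a₀⁻¹);
    -(levy φ ρ x) ≤ 4 * c₁ * (∫ η in ξ..r₀, (ω (ξ + η) - ω ξ) / η ^ (1 + α)) + 2 * c₃ * M₁ ∧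
    levy φ ρ y ≤ 4 * c₁ * (∫ η in ξ..r₀, (ω (ξ + η) - ω ξ) / η ^ (1 + α)) + 2 * c₃ * M₁ := by
  
  intro r₀ c₃
  obtain ⟨hint_x, hrep_x⟩ := levy_repr h hsm hper hρ0 hρM x
  obtain ⟨hint_y, hrep_y⟩ := levy_repr h hsm hper hρ0 hρM y
  constructor
  · rw [hrep_x]
    exact bound_lemma h hω hρ0 hρM hobeys x y ξ hxy hξ hξr hscen hint_x
  · rw [hrep_y]
    set σ : ℝ → ℝ := fun z => M₁ - ρ z with hσdef
    have hσsm : ContDiff ℝ (⊤ : ℕ∞) σ := contDiff_const.sub hsm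
    have hσper : ∀ z, σ (z + 1) = σ z := fun z => by rw [hσdef]; simp only [hper z]
    have hσ0 : ∀ z, 0 ≤ σ z := fun z => by
      rw [hσdef]; simp only; linarith [hρM z]
    have hσM : ∀ z, σ z ≤ M₁ := fun z => by
      rw [hσdef]; simp only; linarith [hρ0 z]
    have hσobeys : ∀ a b : ℝ, a ≠ b → |σ a - σ b| ≤ ω |a - b| := by
      intro a b hab
      have e : σ a - σ b = -(ρ a - ρ b) := by rw [hσdef]; ring
      rw [e, abs_neg]
      exact hobeys a b hab
    have hξ' : ξ = |y - x| := by rw [hξ, abs_sub_comm]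
    have hσscen : σ y - σ x = ω ξ := by rw [hσdef]; simp only; linarith [hscen]
    have hσint : Integrable (fun t => φ t * (σ y - (σ (y - t) + σ (y + t)) / 2)) := by
      refine (hint_y.neg).congr (Filter.Eventually.of_forall fun t => ?_)
      simp only [hσdef, Pi.neg_apply]; ring
    have hb := bound_lemma h hω hσ0 hσM hσobeys y x ξ (Ne.symm hxy) hξ' hξr hσscen hσint
    have he : (∫ t, φ t * (σ y - (σ (y - t) + σ (y + t)) / 2))
        = -(∫ t, φ t * (ρ y - (ρ (y - t) + ρ (y + t)) / 2)) := by
      rw [← integral_neg]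
      refine integral_congr_ae (Filter.Eventually.of_forall fun t => ?_)
      rw [hσdef]; ring
    rw [he, neg_neg] at hb
    exact hb
end
end

section
/- Fix α ∈ (0,2), δ > 0, 0 < γ ≤ δ/2, and λ > 0, and let ω be the modulus of continuity ω(ξ) := δλ^{−1}ξ − (δ/4)λ^{−1−α/2}ξ^{1+α/2} for 0 < ξ ≤ λ and ω(ξ) := (3/4)δ + γ log(ξ/λ) for ξ > λ. Then for every ξ and R with 0 < ξ ≤ λ ≤ R, the scaling-critical bound ∫_ξ^{R} ω(η) η^{−(1+α)} dη ≤ C̄_α δ λ^{−α/2} ξ^{−α/2} holds, where C̄_α := 1/(α²(1−α)) for 0 < α < 1, C̄_α := 2 for α = 1, and C̄_α := 1/(α−1) + 5/4 for 1 < α < 2. -/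
open Real MeasureTheory Filter Set Topology

noncomputable section

/-- The rescaled modulus of continuity `ω` with parameters `δ, γ, λ`. -/
def moc (α δ γ lam : ℝ) (ξ : ℝ) : ℝ :=
  if ξ ≤ lam then δ * lam⁻¹ * ξ - δ / 4 * lam ^ (-(1:ℝ) - α/2) * ξ ^ (1 + α/2)
  else 3 * δ / 4 + γ * Real.log (ξ / lam)

/-- The constant `C̄_α`. -/
def Cbar (α : ℝ) : ℝ :=
  if α < 1 then 1 / (α^2 * (1 - α)) else if α = 1 then 2 else 1 / (α - 1) + 5/4

lemma log_le_div_e {y : ℝ} (hy : 0 < y) : Real.log y ≤ y / Real.exp 1 := by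
  have h := Real.add_one_le_exp (Real.log y - 1)
  rw [Real.exp_sub, Real.exp_log hy] at h
  linarith

lemma contOn_rpow (p : ℝ) (s : Set ℝ) (hs : ∀ x ∈ s, (0:ℝ) < x) :
    ContinuousOn (fun η : ℝ => η ^ p) s :=
  ContinuousOn.rpow_const continuousOn_id (fun x hx => Or.inl (hs x hx).ne')

set_option maxHeartbeats 1000000 in
/-- (Scaling-critical calculus bound.) For `0 < ξ ≤ λ ≤ R`,
`∫_ξ^R ω(η) η^{-(1+α)} dη ≤ C̄_α δ λ^{-α/2} ξ^{-α/2}`. -/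
theorem stmt18 (α δ γ lam : ℝ) (hα : 0 < α) (hα2 : α < 2) (hδ : 0 < δ)
    (hγ0 : 0 < γ) (hγ : γ ≤ δ / 2) (hlam : 0 < lam) :
    ∀ ξ R : ℝ, 0 < ξ → ξ ≤ lam → lam ≤ R →
      (∫ η in ξ..R, moc α δ γ lam η / η ^ (1 + α))
        ≤ Cbar α * δ * lam ^ (-(α/2)) * ξ ^ (-(α/2)) := by
  intro ξ R hξ hξlam hlamR
  have hR : 0 < R := lt_of_lt_of_le hlam hlamR
  have he2 : (2:ℝ) < Real.exp 1 := by have := Real.exp_one_gt_d9; linarith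
  have hepos : (0:ℝ) < Real.exp 1 := Real.exp_pos 1
  set e : ℝ := Real.exp 1 with hedef
  set f1 : ℝ → ℝ :=
    fun η => (δ * lam⁻¹ * η - δ / 4 * lam ^ (-(1:ℝ) - α/2) * η ^ (1 + α/2)) / η ^ (1 + α)
    with hf1
  set f2 : ℝ → ℝ := fun η => (3 * δ / 4 + γ * Real.log (η / lam)) / η ^ (1 + α) with hf2
  set g1 : ℝ → ℝ := fun η => δ * lam⁻¹ * η ^ (-α) with hg1
  set g2 : ℝ → ℝ :=
    fun η => 3 * δ / 4 * η ^ (-(1+α)) + γ * (2 / (α * e)) * lam ^ (-(α/2)) * η ^ (-(1+α/2))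
    with hg2
  -- positivity on intervals
  have hpos1 : ∀ x ∈ Set.Icc ξ lam, (0:ℝ) < x := fun x hx => lt_of_lt_of_le hξ hx.1
  have hpos2 : ∀ x ∈ Set.Icc lam R, (0:ℝ) < x := fun x hx => lt_of_lt_of_le hlam hx.1
  -- EqOn facts
  have hEq1 : Set.EqOn (fun η => moc α δ γ lam η / η ^ (1 + α)) f1 (Set.uIcc ξ lam) := by
    intro η hη
    rw [Set.uIcc_of_le hξlam] at hη
    simp only [hf1, moc, if_pos hη.2]
  have hEq2 : Set.EqOn (fun η => moc α δ γ lam η / η ^ (1 + α)) f2 (Set.uIcc lam R) := by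
    intro η hη
    rw [Set.uIcc_of_le hlamR] at hη
    rcases eq_or_lt_of_le hη.1 with h | h
    · have hbr : moc α δ γ lam η = 3 * δ / 4 + γ * Real.log (η / lam) := by
        rw [← h]
        simp only [moc, if_pos le_rfl, div_self hlam.ne', Real.log_one, mul_zero, add_zero]
        have h1 : lam ^ (-(1:ℝ) - α/2) * lam ^ (1 + α/2) = 1 := by
          rw [← Real.rpow_add hlam]
          norm_num
        rw [mul_assoc (δ/4), h1, mul_assoc, inv_mul_cancel₀ hlam.ne', mul_one]
        ring
      simp only [hf2, hbr]
    · simp only [hf2, moc, if_neg (not_le.mpr h)]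
  -- continuity / integrability
  have hc1 : ContinuousOn f1 (Set.uIcc ξ lam) := by
    rw [Set.uIcc_of_le hξlam]
    exact (((continuousOn_const.mul continuousOn_id).sub
      (continuousOn_const.mul (contOn_rpow _ _ hpos1))).div (contOn_rpow _ _ hpos1)
      (fun x hx => (Real.rpow_pos_of_pos (hpos1 x hx) _).ne'))
  have hc2 : ContinuousOn f2 (Set.uIcc lam R) := by
    rw [Set.uIcc_of_le hlamR]
    refine ContinuousOn.div (continuousOn_const.add (continuousOn_const.mul ?_))
      (contOn_rpow _ _ hpos2) (fun x hx => (Real.rpow_pos_of_pos (hpos2 x hx) _).ne')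
    exact Real.continuousOn_log.comp (continuousOn_id.div_const lam)
      (fun x hx => by simpa using (div_pos (hpos2 x hx) hlam).ne')
  have hI1 : IntervalIntegrable f1 volume ξ lam := hc1.intervalIntegrable
  have hI2 : IntervalIntegrable f2 volume lam R := hc2.intervalIntegrable
  have hIg1 : IntervalIntegrable g1 volume ξ lam := by
    apply ContinuousOn.intervalIntegrable
    rw [Set.uIcc_of_le hξlam]
    exact continuousOn_const.mul (contOn_rpow _ _ hpos1)
  have hIa : IntervalIntegrable (fun η : ℝ => η ^ (-(1+α))) volume lam R := by
    apply ContinuousOn.intervalIntegrable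
    rw [Set.uIcc_of_le hlamR]; exact contOn_rpow _ _ hpos2
  have hIb : IntervalIntegrable (fun η : ℝ => η ^ (-(1+α/2))) volume lam R := by
    apply ContinuousOn.intervalIntegrable
    rw [Set.uIcc_of_le hlamR]; exact contOn_rpow _ _ hpos2
  have hIg2 : IntervalIntegrable g2 volume lam R :=
    ((hIa.const_mul _).add (hIb.const_mul _))
  -- integrability of original integrand on both pieces
  have hIf1 : IntervalIntegrable (fun η => moc α δ γ lam η / η ^ (1 + α)) volume ξ lam := by
    rw [intervalIntegrable_iff]
    exact (intervalIntegrable_iff.mp hI1).congr_fun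
      (fun x hx => (hEq1 (Set.uIoc_subset_uIcc hx)).symm) measurableSet_uIoc
  have hIf2 : IntervalIntegrable (fun η => moc α δ γ lam η / η ^ (1 + α)) volume lam R := by
    rw [intervalIntegrable_iff]
    exact (intervalIntegrable_iff.mp hI2).congr_fun
      (fun x hx => (hEq2 (Set.uIoc_subset_uIcc hx)).symm) measurableSet_uIoc
  -- split the integral
  have hsplit : (∫ η in ξ..R, moc α δ γ lam η / η ^ (1 + α))
      = (∫ η in ξ..lam, f1 η) + ∫ η in lam..R, f2 η := by
    rw [← intervalIntegral.integral_add_adjacent_intervals hIf1 hIf2,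
      intervalIntegral.integral_congr hEq1, intervalIntegral.integral_congr hEq2]
  rw [hsplit]
  -- pointwise bounds
  have hb1 : (∫ η in ξ..lam, f1 η) ≤ ∫ η in ξ..lam, g1 η := by
    apply intervalIntegral.integral_mono_on hξlam hI1 hIg1
    intro η hη
    have hηpos := hpos1 η hη
    have hpow : (0:ℝ) < η ^ (1+α) := Real.rpow_pos_of_pos hηpos _
    have hsub : (0:ℝ) ≤ δ / 4 * lam ^ (-(1:ℝ) - α/2) * η ^ (1 + α/2) := by positivity
    have heta : η / η ^ (1+α) = η ^ (-α) := by
      rw [div_eq_iff hpow.ne', ← Real.rpow_add hηpos]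
      rw [show -α + (1+α) = (1:ℝ) by ring, Real.rpow_one]
    have : f1 η ≤ δ * lam⁻¹ * η / η ^ (1+α) := by
      simp only [hf1]
      gcongr
      linarith
    calc f1 η ≤ δ * lam⁻¹ * η / η ^ (1+α) := this
      _ = g1 η := by rw [hg1]; rw [mul_div_assoc, heta]
  have hb2 : (∫ η in lam..R, f2 η) ≤ ∫ η in lam..R, g2 η := by
    apply intervalIntegral.integral_mono_on hlamR hI2 hIg2
    intro η hη
    have hηpos := hpos2 η hη
    have hpow : (0:ℝ) < η ^ (1+α) := Real.rpow_pos_of_pos hηpos _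
    have hq : (0:ℝ) < η / lam := div_pos hηpos hlam
    have hlog : Real.log (η / lam) ≤ 2 / (α * e) * (lam ^ (-(α/2)) * η ^ (α/2)) := by
      have h1 : Real.log (η / lam) = (2/α) * Real.log ((η/lam) ^ (α/2)) := by
        rw [Real.log_rpow hq]
        field_simp
      have h2 : Real.log ((η/lam) ^ (α/2)) ≤ (η/lam) ^ (α/2) / e :=
        log_le_div_e (Real.rpow_pos_of_pos hq _)
      have h3 : (η/lam) ^ (α/2) = lam ^ (-(α/2)) * η ^ (α/2) := by
        rw [Real.div_rpow hηpos.le hlam.le, Real.rpow_neg hlam.le]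
        ring
      rw [h1]
      calc (2/α) * Real.log ((η/lam) ^ (α/2)) ≤ (2/α) * ((η/lam) ^ (α/2) / e) := by
            apply mul_le_mul_of_nonneg_left h2 (by positivity)
        _ = 2 / (α * e) * (lam ^ (-(α/2)) * η ^ (α/2)) := by
            rw [h3]; ring
    have e1 : η ^ (-(1+α)) * η ^ (1+α) = 1 := by
      rw [← Real.rpow_add hηpos, show -(1+α) + (1+α) = (0:ℝ) by ring, Real.rpow_zero]
    have e2 : η ^ (-(1+α/2)) * η ^ (1+α) = η ^ (α/2) := by
      rw [← Real.rpow_add hηpos]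
      rw [show -(1+α/2) + (1+α) = α/2 by ring]
    simp only [hf2, hg2]
    rw [div_le_iff₀ hpow]
    have key : γ * Real.log (η/lam) ≤ γ * (2 / (α * e)) * lam ^ (-(α/2)) * η ^ (α/2) := by
      calc γ * Real.log (η/lam) ≤ γ * (2 / (α * e) * (lam ^ (-(α/2)) * η ^ (α/2))) :=
            mul_le_mul_of_nonneg_left hlog hγ0.le
        _ = γ * (2 / (α * e)) * lam ^ (-(α/2)) * η ^ (α/2) := by ring
    calc 3 * δ / 4 + γ * Real.log (η / lam)
        ≤ 3 * δ / 4 + γ * (2 / (α * e)) * lam ^ (-(α/2)) * η ^ (α/2) := by linarith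
      _ = (3 * δ / 4 * η ^ (-(1+α)) + γ * (2 / (α * e)) * lam ^ (-(α/2)) * η ^ (-(1+α/2)))
            * η ^ (1+α) := by
          rw [add_mul, mul_assoc (3 * δ / 4), e1, mul_one,
            mul_assoc (γ * (2 / (α * e)) * lam ^ (-(α/2))), e2]
  -- value of second integral
  have h0uIcc : (0:ℝ) ∉ Set.uIcc lam R := Set.notMem_uIcc_of_lt hlam hR
  have hRa : (0:ℝ) < R ^ (-α) := Real.rpow_pos_of_pos hR _
  have hRb : (0:ℝ) < R ^ (-(α/2)) := Real.rpow_pos_of_pos hR _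
  have hA : (0:ℝ) < lam ^ (-α) := Real.rpow_pos_of_pos hlam _
  have hB : (0:ℝ) < lam ^ (-(α/2)) := Real.rpow_pos_of_pos hlam _
  have hQ : (0:ℝ) < ξ ^ (-(α/2)) := Real.rpow_pos_of_pos hξ _
  have hBB : lam ^ (-(α/2)) * lam ^ (-(α/2)) = lam ^ (-α) := by
    rw [← Real.rpow_add hlam, show -(α/2) + -(α/2) = -α by ring]
  have hPA : lam ^ (-α) ≤ lam ^ (-(α/2)) * ξ ^ (-(α/2)) := by
    have hm : lam ^ (-(α/2)) ≤ ξ ^ (-(α/2)) :=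
      Real.rpow_le_rpow_of_nonpos hξ hξlam (by linarith)
    calc lam ^ (-α) = lam ^ (-(α/2)) * lam ^ (-(α/2)) := hBB.symm
      _ ≤ lam ^ (-(α/2)) * ξ ^ (-(α/2)) := mul_le_mul_of_nonneg_left hm hB.le
  have ia : ∫ η in lam..R, η ^ (-(1+α)) = (lam ^ (-α) - R ^ (-α)) / α := by
    rw [integral_rpow (Or.inr ⟨by intro hh; have h00 : α = 0 := (by linarith); exact hα.ne' h00,
      h0uIcc⟩), show -(1+α) + 1 = -α by ring, div_neg, ← neg_div, neg_sub]
  have ib : ∫ η in lam..R, η ^ (-(1+α/2)) = (lam ^ (-(α/2)) - R ^ (-(α/2))) / (α/2) := by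
    rw [integral_rpow (Or.inr ⟨by intro hh; have h00 : α = 0 := (by linarith); exact hα.ne' h00,
      h0uIcc⟩), show -(1+α/2) + 1 = -(α/2) by ring, div_neg, ← neg_div, neg_sub]
  have hJ2 : (∫ η in lam..R, g2 η)
      ≤ 3*δ/(4*α) * lam ^ (-α) + 2*δ/(e*α^2) * lam ^ (-α) := by
    have hval : (∫ η in lam..R, g2 η)
        = 3 * δ / 4 * ((lam ^ (-α) - R ^ (-α)) / α)
          + γ * (2 / (α * e)) * lam ^ (-(α/2)) * ((lam ^ (-(α/2)) - R ^ (-(α/2))) / (α/2)) := by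
      rw [hg2, intervalIntegral.integral_add (hIa.const_mul _) (hIb.const_mul _),
        intervalIntegral.integral_const_mul, intervalIntegral.integral_const_mul, ia, ib]
    rw [hval]
    have t1 : 3 * δ / 4 * ((lam ^ (-α) - R ^ (-α)) / α) ≤ 3*δ/(4*α) * lam ^ (-α) := by
      rw [show 3*δ/(4*α) * lam ^ (-α) = 3 * δ / 4 * (lam ^ (-α) / α) by ring]
      gcongr
      linarith
    have t2 : γ * (2 / (α * e)) * lam ^ (-(α/2)) * ((lam ^ (-(α/2)) - R ^ (-(α/2))) / (α/2))
        ≤ (δ/2) * (2 / (α * e)) * lam ^ (-(α/2)) * (lam ^ (-(α/2)) / (α/2)) := by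
      have hmono : R ^ (-(α/2)) ≤ lam ^ (-(α/2)) :=
        Real.rpow_le_rpow_of_nonpos hlam hlamR (by linarith)
      gcongr
      · linarith
    have t3 : (δ/2) * (2 / (α * e)) * lam ^ (-(α/2)) * (lam ^ (-(α/2)) / (α/2))
        = 2*δ/(e*α^2) * (lam ^ (-(α/2)) * lam ^ (-(α/2))) := by
      field_simp
    rw [hBB] at t3
    linarith
  -- combine
  have hTot : (∫ η in ξ..lam, f1 η) + (∫ η in lam..R, f2 η)
      ≤ (∫ η in ξ..lam, g1 η) + (3*δ/(4*α) * lam ^ (-α) + 2*δ/(e*α^2) * lam ^ (-α)) := by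
    have := intervalIntegral.integral_mono_on hlamR hI2 hIg2
    linarith [hb1, hb2, hJ2]
  rcases lt_trichotomy α 1 with hcase | hcase | hcase
  · -- case α < 1
    have h1α : (0:ℝ) < 1 - α := by linarith
    have hJ1 : (∫ η in ξ..lam, g1 η) ≤ δ * lam ^ (-α) / (1 - α) := by
      have hval : (∫ η in ξ..lam, g1 η)
          = δ * lam⁻¹ * ((lam ^ (1-α) - ξ ^ (1-α)) / (1-α)) := by
        rw [hg1, intervalIntegral.integral_const_mul,
          integral_rpow (Or.inl (by linarith : (-1:ℝ) < -α)), show -α + 1 = 1 - α by ring]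
      rw [hval]
      have hlaminv : lam⁻¹ * lam ^ ((1:ℝ)-α) = lam ^ (-α) := by
        rw [← Real.rpow_neg_one lam, ← Real.rpow_add hlam, show (-1:ℝ) + (1-α) = -α by ring]
      have hξpow : (0:ℝ) ≤ ξ ^ ((1:ℝ)-α) := (Real.rpow_pos_of_pos hξ _).le
      calc δ * lam⁻¹ * ((lam ^ (1-α) - ξ ^ (1-α)) / (1-α))
          ≤ δ * lam⁻¹ * (lam ^ (1-α) / (1-α)) := by
            gcongr
            linarith
        _ = δ * (lam⁻¹ * lam ^ ((1:ℝ)-α)) / (1-α) := by ring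
        _ = δ * lam ^ (-α) / (1-α) := by rw [hlaminv]
    have hnum : 1/(1-α) + 3/(4*α) + 2/(e*α^2) ≤ 1/(α^2*(1-α)) := by
      have hid : 1/(α^2*(1-α)) - (1/(1-α) + 3/(4*α) + 2/(e*α^2))
          = ((1-α)*(α/4 + 1 - 2/e))/(α^2*(1-α)) := by
        field_simp
        ring
      have h2e : 2/e < 1 := by rw [div_lt_one (by linarith)]; linarith
      have hnn : (0:ℝ) ≤ ((1-α)*(α/4 + 1 - 2/e))/(α^2*(1-α)) := by
        apply div_nonneg _ (by positivity)
        apply mul_nonneg h1α.le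
        linarith
      linarith
    have hCb : Cbar α = 1/(α^2*(1-α)) := by rw [Cbar, if_pos hcase]
    rw [hCb]
    have hδA : (0:ℝ) < δ * lam ^ (-α) := by positivity
    have step : (∫ η in ξ..lam, f1 η) + (∫ η in lam..R, f2 η)
        ≤ (1/(1-α) + 3/(4*α) + 2/(e*α^2)) * (δ * lam ^ (-α)) := by
      have : δ * lam ^ (-α) / (1 - α) + (3*δ/(4*α) * lam ^ (-α) + 2*δ/(e*α^2) * lam ^ (-α))
          = (1/(1-α) + 3/(4*α) + 2/(e*α^2)) * (δ * lam ^ (-α)) := by ring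
      linarith [hTot, hJ1]
    calc (∫ η in ξ..lam, f1 η) + (∫ η in lam..R, f2 η)
        ≤ (1/(1-α) + 3/(4*α) + 2/(e*α^2)) * (δ * lam ^ (-α)) := step
      _ ≤ (1/(α^2*(1-α))) * (δ * lam ^ (-α)) := mul_le_mul_of_nonneg_right hnum hδA.le
      _ ≤ (1/(α^2*(1-α))) * (δ * (lam ^ (-(α/2)) * ξ ^ (-(α/2)))) := by
          apply mul_le_mul_of_nonneg_left _ (by positivity)
          exact mul_le_mul_of_nonneg_left hPA hδ.le
      _ = 1/(α^2*(1-α)) * δ * lam ^ (-(α/2)) * ξ ^ (-(α/2)) := by ring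
  · -- case α = 1
    subst hcase
    have hCb : Cbar 1 = 2 := by norm_num [Cbar]
    rw [hCb]
    set t : ℝ := (lam/ξ) ^ ((1:ℝ)/2) with htdef
    have hq1 : (1:ℝ) ≤ lam/ξ := (one_le_div hξ).2 hξlam
    have ht1 : (1:ℝ) ≤ t := Real.one_le_rpow hq1 (by norm_num)
    have hlogt : Real.log t ≤ t - 1 := Real.log_le_sub_one_of_pos (by positivity)
    have hlog2 : Real.log (lam/ξ) = 2 * Real.log t := by
      rw [htdef, Real.log_rpow (by positivity)]
      ring
    have hPt : lam ^ (-(1/2:ℝ)) * ξ ^ (-(1/2:ℝ)) = lam⁻¹ * t := by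
      rw [htdef, Real.div_rpow hlam.le hξ.le, ← Real.rpow_neg_one lam]
      rw [show lam ^ (-1:ℝ) * ((lam ^ ((1:ℝ)/2)) / ξ ^ ((1:ℝ)/2))
          = (lam ^ (-1:ℝ) * lam ^ ((1:ℝ)/2)) * (ξ ^ ((1:ℝ)/2))⁻¹ by ring]
      rw [← Real.rpow_add hlam, ← Real.rpow_neg hξ.le]
      norm_num
    have hJ1 : (∫ η in ξ..lam, g1 η) = δ * lam⁻¹ * Real.log (lam/ξ) := by
      rw [hg1, intervalIntegral.integral_const_mul]
      simp only [Real.rpow_neg_one]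
      rw [integral_inv_of_pos hξ hlam]
    have hlam1 : lam ^ (-(1:ℝ)) = lam⁻¹ := Real.rpow_neg_one lam
    have hfin : δ * lam⁻¹ * Real.log (lam/ξ)
        + (3*δ/(4*1) * lam ^ (-(1:ℝ)) + 2*δ/(e*1^2) * lam ^ (-(1:ℝ)))
        ≤ 2 * δ * (lam⁻¹ * t) := by
      rw [hlam1, hlog2]
      have h2e : 2/e < 1 := by rw [div_lt_one (by linarith)]; linarith
      have hnum : 2 * Real.log t + 3/4 + 2/e ≤ 2 * t := by linarith
      have hpos : (0:ℝ) < δ * lam⁻¹ := by positivity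
      have hm := mul_le_mul_of_nonneg_left hnum hpos.le
      calc δ * lam⁻¹ * (2 * Real.log t) + (3*δ/(4*1) * lam⁻¹ + 2*δ/(e*1^2) * lam⁻¹)
          = δ * lam⁻¹ * (2 * Real.log t + 3/4 + 2/e) := by field_simp; ring
        _ ≤ δ * lam⁻¹ * (2 * t) := hm
        _ = 2 * δ * (lam⁻¹ * t) := by ring
    calc (∫ η in ξ..lam, f1 η) + (∫ η in lam..R, f2 η)
        ≤ δ * lam⁻¹ * Real.log (lam/ξ)
            + (3*δ/(4*1) * lam ^ (-(1:ℝ)) + 2*δ/(e*1^2) * lam ^ (-(1:ℝ))) := by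
          rw [← hJ1]; exact hTot
      _ ≤ 2 * δ * (lam⁻¹ * t) := hfin
      _ = 2 * δ * (lam ^ (-(1/2:ℝ)) * ξ ^ (-(1/2:ℝ))) := by rw [hPt]
      _ = 2 * δ * lam ^ (-(1/2:ℝ)) * ξ ^ (-(1/2:ℝ)) := by ring
  · -- case 1 < α
    have hα1 : (0:ℝ) < α - 1 := by linarith
    have hCb : Cbar α = 1/(α-1) + 5/4 := by
      rw [Cbar, if_neg (not_lt.2 hcase.le), if_neg hcase.ne']
    rw [hCb]
    have hlaminv : lam⁻¹ * lam ^ ((1:ℝ)-α) = lam ^ (-α) := by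
      rw [← Real.rpow_neg_one lam, ← Real.rpow_add hlam, show (-1:ℝ) + (1-α) = -α by ring]
    have hJ1 : (∫ η in ξ..lam, g1 η)
        = δ/(α-1) * (lam⁻¹ * ξ ^ ((1:ℝ)-α)) - δ/(α-1) * lam ^ (-α) := by
      have h0' : (0:ℝ) ∉ Set.uIcc ξ lam := Set.notMem_uIcc_of_lt hξ hlam
      rw [hg1, intervalIntegral.integral_const_mul,
        integral_rpow (Or.inr ⟨by intro hh; have h11 : α = 1 := (by linarith); exact hcase.ne' h11,
          h0'⟩), show -α + 1 = 1 - α by ring]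
      have hne : (1:ℝ) - α ≠ 0 := by intro h; linarith
      rw [show δ * lam⁻¹ * ((lam ^ ((1:ℝ)-α) - ξ ^ ((1:ℝ)-α)) / (1-α))
          = δ/(α-1) * (lam⁻¹ * ξ ^ ((1:ℝ)-α)) - δ/(α-1) * (lam⁻¹ * lam ^ ((1:ℝ)-α)) by
            field_simp
            ring]
      rw [hlaminv]
    -- lam⁻¹ ξ^{1-α} ≤ P
    have hbase : ξ ^ ((1:ℝ)-α/2) ≤ lam ^ ((1:ℝ)-α/2) :=
      Real.rpow_le_rpow hξ.le hξlam (by linarith)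
    have l0 : lam⁻¹ * lam ^ ((1:ℝ)-α/2) = lam ^ (-(α/2)) := by
      rw [← Real.rpow_neg_one lam, ← Real.rpow_add hlam, show (-1:ℝ) + (1-α/2) = -(α/2) by ring]
    have l0' : ξ ^ (-(α/2)) * ξ ^ ((1:ℝ)-α/2) = ξ ^ ((1:ℝ)-α) := by
      rw [← Real.rpow_add hξ, show -(α/2) + (1-α/2) = 1-α by ring]
    have hξP : lam⁻¹ * ξ ^ ((1:ℝ)-α) ≤ lam ^ (-(α/2)) * ξ ^ (-(α/2)) := by
      calc lam⁻¹ * ξ ^ ((1:ℝ)-α) = (lam⁻¹ * ξ ^ (-(α/2))) * ξ ^ ((1:ℝ)-α/2) := by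
            rw [← l0']; ring
        _ ≤ (lam⁻¹ * ξ ^ (-(α/2))) * lam ^ ((1:ℝ)-α/2) := by
            apply mul_le_mul_of_nonneg_left hbase (by positivity)
        _ = lam ^ (-(α/2)) * ξ ^ (-(α/2)) := by rw [← l0]; ring
    -- 3/(4α) + 2/(eα²) ≤ 1/(α-1)
    have hC : 3/(4*α) + 2/(e*α^2) ≤ 1/(α-1) := by
      rw [le_div_iff₀ hα1]
      have t1 : 3/(4*α) * (α-1) ≤ 3/4 := by
        rw [div_mul_eq_mul_div, div_le_div_iff₀ (by positivity) (by norm_num)]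
        nlinarith
      have t2 : 2/(e*α^2) * (α-1) ≤ 1/(2*e) := by
        rw [div_mul_eq_mul_div, div_le_div_iff₀ (by positivity) (by positivity)]
        nlinarith [sq_nonneg (α-2)]
      have t3 : 1/(2*e) ≤ 1/4 := by
        rw [div_le_div_iff₀ (by positivity) (by norm_num)]
        linarith
      linarith [add_mul (3/(4*α)) (2/(e*α^2)) (α-1)]
    have hCmul : (3*δ/(4*α) + 2*δ/(e*α^2)) * lam ^ (-α) ≤ δ/(α-1) * lam ^ (-α) := by
      apply mul_le_mul_of_nonneg_right _ hA.le
      have := mul_le_mul_of_nonneg_left hC hδ.le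
      calc 3*δ/(4*α) + 2*δ/(e*α^2) = δ * (3/(4*α) + 2/(e*α^2)) := by ring
        _ ≤ δ * (1/(α-1)) := this
        _ = δ/(α-1) := by ring
    have hP0 : (0:ℝ) ≤ lam ^ (-(α/2)) * ξ ^ (-(α/2)) := by positivity
    have hstep : δ/(α-1) * (lam⁻¹ * ξ ^ ((1:ℝ)-α)) ≤ δ/(α-1) * (lam ^ (-(α/2)) * ξ ^ (-(α/2))) :=
      mul_le_mul_of_nonneg_left hξP (by positivity)
    calc (∫ η in ξ..lam, f1 η) + (∫ η in lam..R, f2 η)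
        ≤ (δ/(α-1) * (lam⁻¹ * ξ ^ ((1:ℝ)-α)) - δ/(α-1) * lam ^ (-α))
            + (3*δ/(4*α) * lam ^ (-α) + 2*δ/(e*α^2) * lam ^ (-α)) := by
          rw [← hJ1]; exact hTot
      _ ≤ δ/(α-1) * (lam ^ (-(α/2)) * ξ ^ (-(α/2))) := by
          have : 3*δ/(4*α) * lam ^ (-α) + 2*δ/(e*α^2) * lam ^ (-α)
              = (3*δ/(4*α) + 2*δ/(e*α^2)) * lam ^ (-α) := by ring
          linarith [hCmul, hstep]
      _ ≤ (1/(α-1) + 5/4) * δ * lam ^ (-(α/2)) * ξ ^ (-(α/2)) := by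
          have h54 : (0:ℝ) ≤ 5/4 * δ * (lam ^ (-(α/2)) * ξ ^ (-(α/2))) := by positivity
          have expand : (1/(α-1) + 5/4) * δ * lam ^ (-(α/2)) * ξ ^ (-(α/2))
              = δ/(α-1) * (lam ^ (-(α/2)) * ξ ^ (-(α/2)))
                + 5/4 * δ * (lam ^ (-(α/2)) * ξ ^ (-(α/2))) := by ring
          linarith
end
end
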